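/- arXiv:2511.11036 — 5 statements merged into one kernel-verified Lean document; each statement's English description precedes it below -/
import Mathlib

section
/- ∫₀^{log 2} s ds + ∫_{log 2}^∞ log(1/(1 − e^{−s})) ds = (1/2)·ζ(2) = π²/12. -/
/-!
With `φ(x) = -log (1 - e^{-x})`, the region `R = {x, y > 0, e^{-x} + e^{-y} > 1}` is the region
under the graph of `φ` over `(0, ∞)`, so expanding `φ(x) = ∑ e^{-nx} / n` gives
`area R = ∑ 1 / n² = ζ(2)`. Since `R` is symmetric in `x` and `y`, the part of `R` below the
diagonal has area `ζ(2) / 2`. Its vertical section over `x` is `(0, min x (φ x))`, and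
`min x (φ x)` is `x` up to `log 2` (the fixed point of the involution `φ`) and `φ x` beyond it,
so this area is exactly the left-hand side.
-/

open MeasureTheory Real Set

theorem MeasureTheory.Measure.prod_diagonal_eq_zero {α : Type*} [MeasurableSpace α]
    [MeasurableEq α] (μ ν : Measure α) [SFinite ν] [NullSingletonClass ν] :
    μ.prod ν (diagonal α) = 0 := by
  rw [Measure.prod_apply measurableSet_diagonal]
  simp [Set.preimage, Set.diagonal]

lemma lintegral_Ioi_zero_exp_neg_mul_div {a : ℝ} (ha : 0 < a) :
    ∫⁻ x in Ioi 0, ENNReal.ofReal (exp (-(a * x)) / a) = ENNReal.ofReal (1 / a ^ 2) := by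
  have hint : IntegrableOn (fun x => exp (-(a * x))) (Ioi 0) := by
    simpa only [neg_mul] using integrableOn_exp_mul_Ioi (neg_lt_zero.2 ha) 0
  rw [← ofReal_integral_eq_lintegral_ofReal (hint.div_const a)
    (ae_of_all _ fun x => by positivity), integral_div]
  simp only [← neg_mul]
  rw [integral_exp_mul_Ioi (neg_lt_zero.2 ha)]
  congr 1
  field_simp
  simp

lemma half_le_exp_neg_iff {x : ℝ} : 1 / 2 ≤ exp (-x) ↔ x ≤ log 2 := by
  rw [← exp_log (x := 1 / 2) (by norm_num), exp_le_exp, one_div, log_inv, neg_le_neg_iff]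

namespace ExpRegion

noncomputable def phi (s : ℝ) : ℝ := log (1 / (1 - exp (-s)))

lemma phi_eq_neg_log (s : ℝ) : phi s = -log (1 - exp (-s)) := by
  rw [phi, one_div, log_inv]

lemma measurable_phi : Measurable phi := by
  unfold phi; fun_prop

lemma one_sub_exp_neg_pos {s : ℝ} (hs : 0 < s) : 0 < 1 - exp (-s) := by
  simpa using hs

lemma phi_nonneg {s : ℝ} (hs : 0 < s) : 0 ≤ phi s := by
  rw [phi_eq_neg_log, neg_nonneg]
  exact log_nonpos (one_sub_exp_neg_pos hs).le (by linarith [exp_pos (-s)])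

lemma lt_phi_iff {x : ℝ} (hx : 0 < x) (y : ℝ) : y < phi x ↔ 1 < exp (-x) + exp (-y) := by
  rw [phi_eq_neg_log, lt_neg, log_lt_iff_lt_exp (one_sub_exp_neg_pos hx)]
  constructor <;> intro h <;> linarith

lemma hasSum_phi {x : ℝ} (hx : 0 < x) :
    HasSum (fun n : ℕ => exp (-((n + 1 : ℝ) * x)) / (n + 1)) (phi x) := by
  have habs : |exp (-x)| < 1 := by
    rw [abs_of_pos (exp_pos _)]; simpa using hx
  rw [phi_eq_neg_log]
  convert hasSum_pow_div_log_of_abs_lt_one habs using 2 with n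
  rw [← exp_nat_mul]; push_cast; ring_nf

lemma lintegral_phi : ∫⁻ x in Ioi 0, ENNReal.ofReal (phi x) = ENNReal.ofReal (π ^ 2 / 6) := by
  have hzeta : HasSum (fun n : ℕ => 1 / ((n : ℝ) + 1) ^ 2) (π ^ 2 / 6) := by
    simpa using (hasSum_nat_add_iff' 1).2 hasSum_zeta_two
  calc ∫⁻ x in Ioi 0, ENNReal.ofReal (phi x)
      = ∫⁻ x in Ioi 0, ∑' n : ℕ, ENNReal.ofReal (exp (-((n + 1 : ℝ) * x)) / (n + 1)) := by
        refine setLIntegral_congr_fun measurableSet_Ioi fun x hx => ?_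
        rw [← (hasSum_phi hx).tsum_eq,
          ENNReal.ofReal_tsum_of_nonneg (fun n => by positivity) (hasSum_phi hx).summable]
    _ = ∑' n : ℕ, ENNReal.ofReal (1 / ((n : ℝ) + 1) ^ 2) := by
        rw [lintegral_tsum fun n => by fun_prop]
        exact tsum_congr fun n => lintegral_Ioi_zero_exp_neg_mul_div (by positivity)
    _ = ENNReal.ofReal (π ^ 2 / 6) := by
        rw [← ENNReal.ofReal_tsum_of_nonneg (fun n => by positivity) hzeta.summable,
          hzeta.tsum_eq]

def region : Set (ℝ × ℝ) := {p | 0 < p.1 ∧ 0 < p.2 ∧ 1 < exp (-p.1) + exp (-p.2)}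

def lowerRegion : Set (ℝ × ℝ) := {p | 0 < p.2 ∧ p.2 < p.1 ∧ 1 < exp (-p.1) + exp (-p.2)}

lemma measurableSet_region : MeasurableSet region := by
  unfold region; measurability

lemma measurableSet_lowerRegion : MeasurableSet lowerRegion := by
  unfold lowerRegion; measurability

lemma preimage_mk_region {x : ℝ} (hx : 0 < x) : Prod.mk x ⁻¹' region = Ioo 0 (phi x) := by
  ext y
  simp [region, hx, lt_phi_iff hx]

lemma preimage_mk_region_of_nonpos {x : ℝ} (hx : x ≤ 0) : Prod.mk x ⁻¹' region = ∅ := by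
  ext y
  simp only [region, mem_preimage, mem_ofPred_eq, mem_empty_iff_false, iff_false]
  exact fun h => not_lt.2 hx h.1

lemma volume_region : volume region = ENNReal.ofReal (π ^ 2 / 6) := by
  rw [Measure.volume_eq_prod, Measure.prod_apply measurableSet_region, ← lintegral_phi,
    ← lintegral_indicator measurableSet_Ioi]
  congr 1 with x
  rcases lt_or_ge 0 x with hx | hx
  · rw [indicator_of_mem (show x ∈ Ioi 0 from hx), preimage_mk_region hx, volume_Ioo, sub_zero]
  · rw [indicator_of_notMem (show x ∉ Ioi 0 from not_lt.2 hx), preimage_mk_region_of_nonpos hx,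
      measure_empty]

lemma lowerRegion_union_preimage_swap :
    lowerRegion ∪ Prod.swap ⁻¹' lowerRegion = region \ diagonal ℝ := by
  ext ⟨x, y⟩
  simp only [lowerRegion, region, mem_union, mem_preimage, Prod.swap_prod_mk, mem_ofPred_eq,
    Set.mem_sdiff, mem_diagonal_iff]
  constructor
  · rintro (⟨hy, hyx, h⟩ | ⟨hx, hxy, h⟩)
    · exact ⟨⟨hy.trans hyx, hy, h⟩, hyx.ne'⟩
    · exact ⟨⟨hx, hx.trans hxy, by linarith⟩, hxy.ne⟩
  · rintro ⟨⟨hx, hy, h⟩, hne⟩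
    rcases lt_or_gt_of_ne hne with hxy | hyx
    · exact Or.inr ⟨hx, hxy, by linarith⟩
    · exact Or.inl ⟨hy, hyx, h⟩

lemma volume_region_eq_two_mul : volume region = 2 * volume lowerRegion := by
  have hswap : volume (Prod.swap ⁻¹' lowerRegion) = volume lowerRegion := by
    rw [Measure.volume_eq_prod]
    exact Measure.measurePreserving_swap.measure_preimage
      measurableSet_lowerRegion.nullMeasurableSet
  have hdisj : Disjoint lowerRegion (Prod.swap ⁻¹' lowerRegion) := by
    rw [Set.disjoint_left]
    rintro ⟨x, y⟩ ⟨-, hyx, -⟩ ⟨-, hxy, -⟩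
    exact lt_asymm hyx hxy
  have hdiag : volume (diagonal ℝ) = 0 := by
    rw [Measure.volume_eq_prod]
    exact Measure.prod_diagonal_eq_zero _ _
  rw [← measure_sdiff_null hdiag, ← lowerRegion_union_preimage_swap,
    measure_union hdisj (measurableSet_lowerRegion.preimage measurable_swap), hswap, two_mul]

lemma volume_lowerRegion : volume lowerRegion = ENNReal.ofReal (π ^ 2 / 12) := by
  have h := volume_region_eq_two_mul
  rw [volume_region, show π ^ 2 / 6 = 2 * (π ^ 2 / 12) by ring, ENNReal.ofReal_mul zero_le_two,
    ENNReal.ofReal_ofNat] at h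
  exact ((ENNReal.mul_right_inj two_ne_zero ENNReal.ofNat_ne_top).1 h).symm

lemma preimage_mk_lowerRegion_of_le {x : ℝ} (hx : x ≤ log 2) :
    Prod.mk x ⁻¹' lowerRegion = Ioo 0 x := by
  have hx' := half_le_exp_neg_iff.2 hx
  ext y
  simp only [lowerRegion, mem_preimage, mem_ofPred_eq, mem_Ioo]
  refine ⟨fun h => ⟨h.1, h.2.1⟩, fun h => ⟨h.1, h.2, ?_⟩⟩
  have : exp (-x) < exp (-y) := exp_lt_exp.2 (neg_lt_neg h.2)
  linarith

lemma preimage_mk_lowerRegion_of_lt {x : ℝ} (hx : log 2 < x) :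
    Prod.mk x ⁻¹' lowerRegion = Ioo 0 (phi x) := by
  have hx' : exp (-x) < 1 / 2 := lt_of_not_ge (mt half_le_exp_neg_iff.1 (not_le.2 hx))
  ext y
  simp only [lowerRegion, mem_preimage, mem_ofPred_eq, mem_Ioo,
    lt_phi_iff ((log_pos one_lt_two).trans hx)]
  refine ⟨fun h => ⟨h.1, h.2.2⟩, fun h => ⟨h.1, ?_, h.2⟩⟩
  exact neg_lt_neg_iff.1 (exp_lt_exp.1 (by linarith))

lemma volume_lowerRegion_eq_lintegral : volume lowerRegion =
    (∫⁻ x in Ioc 0 (log 2), ENNReal.ofReal x) +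
      ∫⁻ x in Ioi (log 2), ENNReal.ofReal (phi x) := by
  rw [← lintegral_indicator measurableSet_Ioc, ← lintegral_indicator measurableSet_Ioi,
    ← lintegral_add_left (ENNReal.measurable_ofReal.indicator measurableSet_Ioc),
    Measure.volume_eq_prod, Measure.prod_apply measurableSet_lowerRegion]
  congr 1 with x
  rcases le_or_gt x (log 2) with hx | hx
  · rw [preimage_mk_lowerRegion_of_le hx, volume_Ioo, sub_zero,
      indicator_of_notMem (show x ∉ Ioi (log 2) from not_lt.2 hx), add_zero]
    rcases le_or_gt x 0 with hx0 | hx0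
    · rw [indicator_of_notMem (show x ∉ Ioc 0 (log 2) from fun h => not_lt.2 hx0 h.1),
        ENNReal.ofReal_of_nonpos hx0]
    · rw [indicator_of_mem (show x ∈ Ioc 0 (log 2) from ⟨hx0, hx⟩)]
  · rw [preimage_mk_lowerRegion_of_lt hx, volume_Ioo, sub_zero,
      indicator_of_notMem (show x ∉ Ioc 0 (log 2) from fun h => not_le.2 hx h.2),
      indicator_of_mem (show x ∈ Ioi (log 2) from hx), zero_add]

lemma toReal_volume_lowerRegion : (volume lowerRegion).toReal =
    (∫ x in Ioc 0 (log 2), x) + ∫ x in Ioi (log 2), phi x := by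
  have hfin := volume_lowerRegion_eq_lintegral ▸ volume_lowerRegion ▸ ENNReal.ofReal_ne_top
  obtain ⟨hfin₁, hfin₂⟩ := ENNReal.add_ne_top.1 hfin
  rw [volume_lowerRegion_eq_lintegral, ENNReal.toReal_add hfin₁ hfin₂]
  congr 1 <;> refine (integral_eq_lintegral_of_nonneg_ae ?_ ?_).symm
  · exact ae_restrict_of_forall_mem measurableSet_Ioc fun x hx => hx.1.le
  · exact measurable_id.aestronglyMeasurable
  · exact ae_restrict_of_forall_mem measurableSet_Ioi fun x hx =>
      phi_nonneg ((log_pos one_lt_two).trans hx)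
  · exact measurable_phi.aestronglyMeasurable

end ExpRegion

theorem stmt_3 :
    (∫ s in (0:ℝ)..(Real.log 2), s) +
      (∫ s in Set.Ioi (Real.log 2), Real.log (1 / (1 - Real.exp (-s)))) =
      Real.pi ^ 2 / 12 := by
  rw [intervalIntegral.integral_of_le (log_nonneg one_le_two)]
  change _ + ∫ s in Ioi (log 2), ExpRegion.phi s = _
  rw [← ExpRegion.toReal_volume_lowerRegion, ExpRegion.volume_lowerRegion,
    ENNReal.toReal_ofReal (by positivity)]
end

section
/- Let f : [0,∞) → [0,∞) be continuous, nonincreasing, with u ↦ u + f(u) nondecreasing. Define Φ(x,y) = max{x,y} + f(|x−y|). Then Φ is monotone in each argument: if x ≤ x′ then Φ(x,y) ≤ Φ(x′,y) for every y. -/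
/-! On `x ≥ y` the map `x ↦ max x y + f |x - y|` is `x ↦ y + g (x - y)` with `g u = u + f u`
nondecreasing, and on `x ≤ y` it is `x ↦ y + f (y - x)` with `f` nonincreasing; monotone on
both half-lines meeting at `y`, it is monotone everywhere. -/

open Set

variable {α : Type*} [AddCommGroup α] [LinearOrder α] [IsOrderedAddMonoid α] {f : α → α}

lemma monotoneOn_max_add_abs_sub_Ici (hmap : MonotoneOn (fun u => u + f u) (Ici 0)) (y : α) :
    MonotoneOn (fun x => max x y + f |x - y|) (Ici y) := by
  intro x hx x' hx' hxx'
  have hx₀ : 0 ≤ x - y := sub_nonneg.2 hx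
  have hx₀' : 0 ≤ x' - y := sub_nonneg.2 hx'
  have key := hmap hx₀ hx₀' (sub_le_sub_right hxx' y)
  simp only [max_eq_left (mem_Ici.1 hx), max_eq_left (mem_Ici.1 hx'), abs_of_nonneg hx₀,
    abs_of_nonneg hx₀'] at key ⊢
  simpa only [sub_add_eq_add_sub, add_sub_cancel] using add_le_add_right key y

lemma monotoneOn_max_add_abs_sub_Iic (hanti : AntitoneOn f (Ici 0)) (y : α) :
    MonotoneOn (fun x => max x y + f |x - y|) (Iic y) := by
  intro x hx x' hx' hxx'
  have hx₀ : 0 ≤ y - x := sub_nonneg.2 hx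
  have hx₀' : 0 ≤ y - x' := sub_nonneg.2 hx'
  have key := hanti hx₀' hx₀ (sub_le_sub_left hxx' y)
  simp only [max_eq_right (mem_Iic.1 hx), max_eq_right (mem_Iic.1 hx'), abs_sub_comm _ y,
    abs_of_nonneg hx₀, abs_of_nonneg hx₀']
  exact add_le_add_right key y

lemma monotone_max_add_abs_sub (hanti : AntitoneOn f (Ici 0))
    (hmap : MonotoneOn (fun u => u + f u) (Ici 0)) (y : α) :
    Monotone (fun x => max x y + f |x - y|) :=
  (monotoneOn_max_add_abs_sub_Iic hanti y).Iic_union_Ici (monotoneOn_max_add_abs_sub_Ici hmap y)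

theorem stmt_9_general (f : ℝ → ℝ)
    (hanti : AntitoneOn f (Set.Ici (0:ℝ)))
    (hmap : MonotoneOn (fun u => u + f u) (Set.Ici (0:ℝ)))
    (Φ : ℝ → ℝ → ℝ) (hΦ : ∀ x y, Φ x y = max x y + f |x - y|) :
    ∀ x x' y : ℝ, x ≤ x' → Φ x y ≤ Φ x' y := by
  intro x x' y hxx'
  rw [hΦ, hΦ]
  exact monotone_max_add_abs_sub hanti hmap y hxx'

theorem stmt_9 (f : ℝ → ℝ)
    (hcont : ContinuousOn f (Set.Ici (0:ℝ)))
    (hnonneg : ∀ u ∈ Set.Ici (0:ℝ), 0 ≤ f u)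
    (hanti : AntitoneOn f (Set.Ici (0:ℝ)))
    (hmap : MonotoneOn (fun u => u + f u) (Set.Ici (0:ℝ)))
    (Φ : ℝ → ℝ → ℝ) (hΦ : ∀ x y, Φ x y = max x y + f |x - y|) :
    ∀ x x' y : ℝ, x ≤ x' → Φ x y ≤ Φ x' y :=
  stmt_9_general f hanti hmap Φ hΦ
end

section
/- Let T be an operator on the space of nondecreasing right-continuous functions F : ℝ → [0,1] (extended CDFs), satisfying: (i) monotonicity (F ≤ G pointwise implies TF ≤ TG), (ii) commutation with constants (if c₋ ≤ F ≤ c₊ pointwise with c₋,c₊ ∈ [0,1] and c ∈ [−c₋, 1−c₊], then T(F+c) = TF + c), and (iii) stationarity at infinity (lim_{x→±∞} TF(x) = lim_{x→±∞} F(x)). Then T is contractive in the supremum norm: ‖TF − TG‖_∞ ≤ ‖F − G‖_∞ for all such F, G. -/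
/-!
If `F ≤ G + C` with `0 ≤ C ≤ 1`, truncate `G` to `N = min G (1 - C)`. Then `N + C` is still a CDF,
`F ≤ N + C` and `N ≤ G`, so monotonicity and commutation with the constant `C` give
`T F ≤ T (N + C) = T N + C ≤ T G + C`. For `C > 1` the bound is trivial since `T F, T G ∈ [0,1]`.
-/

/-- An extended CDF: a nondecreasing, right-continuous function `ℝ → [0,1]`. -/
def IsCDF (F : ℝ → ℝ) : Prop :=
  Monotone F ∧ (∀ x, F x ∈ Set.Icc (0:ℝ) 1) ∧ ∀ x, ContinuousWithinAt F (Set.Ici x) x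

namespace IsCDF

variable {F : ℝ → ℝ}

lemma min_const (hF : IsCDF F) {c : ℝ} (hc₀ : 0 ≤ c) :
    IsCDF fun x => min (F x) c :=
  ⟨fun _ _ hab => min_le_min_right c (hF.1 hab),
    fun x => ⟨le_min (hF.2.1 x).1 hc₀, (min_le_left _ _).trans (hF.2.1 x).2⟩,
    fun x => (hF.2.2 x).min continuousWithinAt_const⟩

lemma add_const (hF : IsCDF F) {c : ℝ} (hc : ∀ x, F x + c ∈ Set.Icc (0:ℝ) 1) :
    IsCDF fun x => F x + c :=
  ⟨fun _ _ hab => add_le_add_left (hF.1 hab) c, hc,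
    fun x => (hF.2.2 x).add continuousWithinAt_const⟩

end IsCDF

lemma le_add_of_sub_le_of_mono_of_commute_const (T : (ℝ → ℝ) → (ℝ → ℝ))
    (hmono : ∀ F G, IsCDF F → IsCDF G → (∀ x, F x ≤ G x) → ∀ x, T F x ≤ T G x)
    (hconst : ∀ F (cm cp c : ℝ), IsCDF F → (0:ℝ) ≤ cm → cp ≤ 1 →
      (∀ x, cm ≤ F x ∧ F x ≤ cp) → -cm ≤ c → c ≤ 1 - cp →
      T (fun x => F x + c) = fun x => T F x + c)
    {F G : ℝ → ℝ} (hF : IsCDF F) (hG : IsCDF G) {C : ℝ} (hC₀ : 0 ≤ C) (hC₁ : C ≤ 1)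
    (hFG : ∀ y, F y - G y ≤ C) (x : ℝ) :
    T F x ≤ T G x + C := by
  set N : ℝ → ℝ := fun y => min (G y) (1 - C)
  have hN : IsCDF N := hG.min_const (by linarith)
  have hN_bounds : ∀ y, 0 ≤ N y ∧ N y ≤ 1 - C := fun y => ⟨(hN.2.1 y).1, min_le_right _ _⟩
  have hNC : IsCDF fun y => N y + C :=
    hN.add_const fun y => ⟨by linarith [(hN_bounds y).1], by linarith [(hN_bounds y).2]⟩
  have hF_le : ∀ y, F y ≤ N y + C := fun y => by
    rw [← min_add_add_right]
    exact le_min (by linarith [hFG y]) (by linarith [(hF.2.1 y).2])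
  calc T F x ≤ T (fun y => N y + C) x := hmono F _ hF hNC hF_le x
    _ = T N x + C := by
      rw [hconst N 0 (1 - C) C hN le_rfl (by linarith) hN_bounds (by linarith) (by linarith)]
    _ ≤ T G x + C := by
      gcongr
      exact hmono N G hN hG (fun y => min_le_left _ _) x

theorem stmt_11_general (T : (ℝ → ℝ) → (ℝ → ℝ))
    (hmaps : ∀ F, IsCDF F → IsCDF (T F))
    (hmono : ∀ F G, IsCDF F → IsCDF G → (∀ x, F x ≤ G x) → ∀ x, T F x ≤ T G x)
    (hconst : ∀ F (cm cp c : ℝ), IsCDF F → (0:ℝ) ≤ cm → cp ≤ 1 →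
      (∀ x, cm ≤ F x ∧ F x ≤ cp) → -cm ≤ c → c ≤ 1 - cp →
      T (fun x => F x + c) = fun x => T F x + c) :
    ∀ F G : ℝ → ℝ, IsCDF F → IsCDF G →
      ∀ C : ℝ, (∀ y, |F y - G y| ≤ C) → ∀ x, |T F x - T G x| ≤ C := by
  intro F G hF hG C hFG x
  have hC₀ : 0 ≤ C := (abs_nonneg _).trans (hFG 0)
  rw [abs_sub_le_iff]
  rcases le_or_gt C 1 with hC₁ | hC₁
  · have hFG' : ∀ y, F y - G y ≤ C := fun y => (le_abs_self _).trans (hFG y)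
    have hGF : ∀ y, G y - F y ≤ C := fun y => (le_abs_self _).trans (abs_sub_comm (F y) _ ▸ hFG y)
    have h₁ := le_add_of_sub_le_of_mono_of_commute_const T hmono hconst hF hG hC₀ hC₁ hFG' x
    have h₂ := le_add_of_sub_le_of_mono_of_commute_const T hmono hconst hG hF hC₀ hC₁ hGF x
    constructor <;> linarith
  · have hTF := (hmaps F hF).2.1 x
    have hTG := (hmaps G hG).2.1 x
    constructor <;> linarith [hTF.1, hTF.2, hTG.1, hTG.2]

theorem stmt_11 (T : (ℝ → ℝ) → (ℝ → ℝ))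
    (hmaps : ∀ F, IsCDF F → IsCDF (T F))
    (hmono : ∀ F G, IsCDF F → IsCDF G → (∀ x, F x ≤ G x) → ∀ x, T F x ≤ T G x)
    (hconst : ∀ F (cm cp c : ℝ), IsCDF F → (0:ℝ) ≤ cm → cp ≤ 1 →
      (∀ x, cm ≤ F x ∧ F x ≤ cp) → -cm ≤ c → c ≤ 1 - cp →
      T (fun x => F x + c) = fun x => T F x + c)
    (hstat_top : ∀ F L, IsCDF F → Filter.Tendsto F Filter.atTop (nhds L) →
      Filter.Tendsto (T F) Filter.atTop (nhds L))
    (hstat_bot : ∀ F L, IsCDF F → Filter.Tendsto F Filter.atBot (nhds L) →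
      Filter.Tendsto (T F) Filter.atBot (nhds L)) :
    ∀ F G : ℝ → ℝ, IsCDF F → IsCDF G →
      ∀ C : ℝ, (∀ y, |F y - G y| ≤ C) → ∀ x, |T F x - T G x| ≤ C :=
  stmt_11_general T hmaps hmono hconst
end

section
/- Let T be an operator on extended CDFs satisfying monotonicity, commutation with constants, and stationarity at infinity (as in the contractivity proposition). If F₁, F₂ are extended CDFs with F₂ ≤ TF₁ pointwise, then for any δ ∈ [0,1] and c ∈ [0,1−δ], the functions Gᵢ = max{Fᵢ − δ, c} satisfy G₂ ≤ TG₁ pointwise. -/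
/-!
Since `max (F - δ) c = max F (c + δ) - δ`, commutation with constants turns `T G₁` into
`T (max F₁ (c + δ)) - δ`, which dominates `T F₁ - δ ≥ F₂ - δ` by monotonicity. The bound
`c ≤ T G₁` comes from writing `G₁ = (G₁ - c) + c` and using that `T (G₁ - c)` is nonnegative.
-/

def CommutesWithConstants (T : (ℝ → ℝ) → (ℝ → ℝ)) : Prop :=
  ∀ F (cm cp c : ℝ), IsCDF F → (0:ℝ) ≤ cm → cp ≤ 1 →
    (∀ x, cm ≤ F x ∧ F x ≤ cp) → -cm ≤ c → c ≤ 1 - cp →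
    T (fun x => F x + c) = fun x => T F x + c

namespace IsCDF

variable {F : ℝ → ℝ} {a : ℝ}

theorem max_const (hF : IsCDF F) (ha₀ : 0 ≤ a) (ha₁ : a ≤ 1) : IsCDF fun x => max (F x) a :=
  ⟨fun _ _ hxy => max_le_max (hF.1 hxy) le_rfl,
    fun x => ⟨ha₀.trans (le_max_right _ _), max_le (hF.2.1 x).2 ha₁⟩,
    fun x => (hF.2.2 x).max continuousWithinAt_const⟩

theorem sub_const (hF : IsCDF F) (ha : 0 ≤ a) (haF : ∀ x, a ≤ F x) :
    IsCDF fun x => F x - a :=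
  ⟨fun _ _ hxy => sub_le_sub_right (hF.1 hxy) a,
    fun x => ⟨sub_nonneg.2 (haF x), by linarith [(hF.2.1 x).2]⟩,
    fun x => (hF.2.2 x).sub continuousWithinAt_const⟩

end IsCDF

section Operator

variable {T : (ℝ → ℝ) → (ℝ → ℝ)} {F : ℝ → ℝ} {a : ℝ}

theorem CommutesWithConstants.apply_sub_const (hT : CommutesWithConstants T) (hF : IsCDF F)
    (ha : 0 ≤ a) (haF : ∀ x, a ≤ F x) : T (fun x => F x - a) = fun x => T F x - a := by
  simpa only [← sub_eq_add_neg] using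
    hT F a 1 (-a) hF ha le_rfl (fun x => ⟨haF x, (hF.2.1 x).2⟩) le_rfl (by linarith)

theorem CommutesWithConstants.le_apply (hmaps : ∀ F, IsCDF F → IsCDF (T F))
    (hT : CommutesWithConstants T) (hF : IsCDF F) (ha : 0 ≤ a) (haF : ∀ x, a ≤ F x) (x : ℝ) :
    a ≤ T F x := by
  have hshift := hT (fun x => F x - a) 0 (1 - a) a (hF.sub_const ha haF) le_rfl (by linarith)
    (fun x => ⟨sub_nonneg.2 (haF x), by linarith [(hF.2.1 x).2]⟩) (by linarith) (by linarith)
  simp only [sub_add_cancel] at hshift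
  rw [hshift]
  linarith [((hmaps _ (hF.sub_const ha haF)).2.1 x).1]

end Operator

theorem stmt_12_general (T : (ℝ → ℝ) → (ℝ → ℝ))
    (hmaps : ∀ F, IsCDF F → IsCDF (T F))
    (hmono : ∀ F G, IsCDF F → IsCDF G → (∀ x, F x ≤ G x) → ∀ x, T F x ≤ T G x)
    (hconst : ∀ F (cm cp c : ℝ), IsCDF F → (0:ℝ) ≤ cm → cp ≤ 1 →
      (∀ x, cm ≤ F x ∧ F x ≤ cp) → -cm ≤ c → c ≤ 1 - cp →
      T (fun x => F x + c) = fun x => T F x + c)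
    (F₁ F₂ : ℝ → ℝ) (hF₁ : IsCDF F₁)
    (hle : ∀ x, F₂ x ≤ T F₁ x)
    (δ c : ℝ) (hδ : δ ∈ Set.Icc (0:ℝ) 1) (hc : c ∈ Set.Icc (0:ℝ) (1 - δ)) :
    ∀ x, max (F₂ x - δ) c ≤ T (fun y => max (F₁ y - δ) c) x := by
  obtain ⟨hδ₀, -⟩ := hδ
  obtain ⟨hc₀, hc₁⟩ := hc
  have hH := hF₁.max_const (a := c + δ) (by linarith) (by linarith)
  have hδH : ∀ y, δ ≤ max (F₁ y) (c + δ) := fun y => le_max_of_le_right (by linarith)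
  have hG : (fun y => max (F₁ y - δ) c) = fun y => max (F₁ y) (c + δ) - δ :=
    funext fun y => by rw [← max_sub_sub_right, add_sub_cancel_right]
  intro x
  rw [hG, CommutesWithConstants.apply_sub_const hconst hH hδ₀ hδH]
  refine max_le ?_ ?_
  · calc F₂ x - δ ≤ T F₁ x - δ := sub_le_sub_right (hle x) δ
      _ ≤ T (fun y => max (F₁ y) (c + δ)) x - δ :=
        sub_le_sub_right (hmono _ _ hF₁ hH (fun y => le_max_left _ _) x) δ
  · have hcδ := CommutesWithConstants.le_apply hmaps hconst hH (by linarith)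
      (fun y => le_max_right _ _) x
    linarith

theorem stmt_12 (T : (ℝ → ℝ) → (ℝ → ℝ))
    (hmaps : ∀ F, IsCDF F → IsCDF (T F))
    (hmono : ∀ F G, IsCDF F → IsCDF G → (∀ x, F x ≤ G x) → ∀ x, T F x ≤ T G x)
    (hconst : ∀ F (cm cp c : ℝ), IsCDF F → (0:ℝ) ≤ cm → cp ≤ 1 →
      (∀ x, cm ≤ F x ∧ F x ≤ cp) → -cm ≤ c → c ≤ 1 - cp →
      T (fun x => F x + c) = fun x => T F x + c)
    (hstat_top : ∀ F L, IsCDF F → Filter.Tendsto F Filter.atTop (nhds L) →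
      Filter.Tendsto (T F) Filter.atTop (nhds L))
    (hstat_bot : ∀ F L, IsCDF F → Filter.Tendsto F Filter.atBot (nhds L) →
      Filter.Tendsto (T F) Filter.atBot (nhds L))
    (F₁ F₂ : ℝ → ℝ) (hF₁ : IsCDF F₁) (hF₂ : IsCDF F₂)
    (hle : ∀ x, F₂ x ≤ T F₁ x)
    (δ c : ℝ) (hδ : δ ∈ Set.Icc (0:ℝ) 1) (hc : c ∈ Set.Icc (0:ℝ) (1 - δ)) :
    ∀ x, max (F₂ x - δ) c ≤ T (fun y => max (F₁ y - δ) c) x :=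
  stmt_12_general T hmaps hmono hconst F₁ F₂ hF₁ hle δ c hδ hc
end

section
/- Let F, G : ℝ → [0,1] be extended CDFs with F ≤ G pointwise. Then there exists a Borel probability measure Π on ℝ̄ × ℝ̄ supported on {(x,y) : x ≤ y} whose first marginal has CDF G and whose second marginal has CDF F. -/
/-! Quantile coupling: with `U` uniform on `(0, 1]` and `F⁻(u) = inf {t | u ≤ F t}` taken in `ℝ̄`,
right-continuity of `F` gives `F⁻(u) ≤ x ↔ u ≤ F x`, so `F⁻(U)` has CDF `F`. The pair
`(G⁻(U), F⁻(U))` is then the required coupling, and it lies in `{x ≤ y}` because `F ≤ G`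
gives `{t | u ≤ F t} ⊆ {t | u ≤ G t}`, hence `G⁻ ≤ F⁻`. -/

open MeasureTheory Set

noncomputable def erealQuantile (F : ℝ → ℝ) (u : ℝ) : EReal :=
  sInf (Real.toEReal '' {t : ℝ | u ≤ F t})

lemma erealQuantile_mono (F : ℝ → ℝ) : Monotone (erealQuantile F) :=
  fun _ _ huv => sInf_le_sInf (image_mono fun _ ht => huv.trans ht)

lemma erealQuantile_le_erealQuantile {F G : ℝ → ℝ} (hle : ∀ x, F x ≤ G x) (u : ℝ) :
    erealQuantile G u ≤ erealQuantile F u :=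
  sInf_le_sInf (image_mono fun t ht => le_trans ht (hle t))

lemma erealQuantile_le_iff {F : ℝ → ℝ} (hmono : Monotone F)
    (hrc : ∀ x, ContinuousWithinAt F (Ici x) x) (u x : ℝ) :
    erealQuantile F u ≤ (x : EReal) ↔ u ≤ F x := by
  refine ⟨fun h => ?_, fun h => sInf_le ⟨x, h, rfl⟩⟩
  have h_right : ∀ t : ℝ, x < t → u ≤ F t := by
    intro t hxt
    obtain ⟨_, ⟨s, hs, rfl⟩, hst⟩ :=
      sInf_lt_iff.1 (h.trans_lt (EReal.coe_lt_coe_iff.2 hxt))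
    exact hs.trans (hmono (EReal.coe_le_coe_iff.1 hst.le))
  exact ge_of_tendsto ((hrc x).mono Ioi_subset_Ici_self)
    (Filter.eventually_of_mem self_mem_nhdsWithin h_right)

lemma map_erealQuantile_Iic {F : ℝ → ℝ} (hmono : Monotone F)
    (hrc : ∀ x, ContinuousWithinAt F (Ici x) x) {x : ℝ} (hx : F x ≤ 1) :
    (volume.restrict (Ioc 0 1)).map (erealQuantile F) (Iic (x : EReal)) =
      ENNReal.ofReal (F x) := by
  have hpre : erealQuantile F ⁻¹' Iic (x : EReal) = Iic (F x) := by
    ext u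
    exact erealQuantile_le_iff hmono hrc u x
  rw [Measure.map_apply (erealQuantile_mono F).measurable measurableSet_Iic, hpre,
    Measure.restrict_apply measurableSet_Iic, Iic_inter_Ioc_of_le hx, Real.volume_Ioc,
    sub_zero]

noncomputable def quantileCoupling (F G : ℝ → ℝ) : Measure (EReal × EReal) :=
  (volume.restrict (Ioc 0 1)).map fun u => (erealQuantile G u, erealQuantile F u)

lemma measurable_erealQuantile_pair (F G : ℝ → ℝ) :
    Measurable fun u => (erealQuantile G u, erealQuantile F u) :=
  (erealQuantile_mono G).measurable.prodMk (erealQuantile_mono F).measurable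

instance (F G : ℝ → ℝ) : IsProbabilityMeasure (quantileCoupling F G) := by
  have : IsProbabilityMeasure (volume.restrict (Ioc (0 : ℝ) 1)) := ⟨by simp⟩
  exact Measure.isProbabilityMeasure_map (measurable_erealQuantile_pair F G).aemeasurable

lemma quantileCoupling_map_fst (F G : ℝ → ℝ) :
    (quantileCoupling F G).map Prod.fst = (volume.restrict (Ioc 0 1)).map (erealQuantile G) :=
  Measure.map_map measurable_fst (measurable_erealQuantile_pair F G)

lemma quantileCoupling_map_snd (F G : ℝ → ℝ) :
    (quantileCoupling F G).map Prod.snd = (volume.restrict (Ioc 0 1)).map (erealQuantile F) :=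
  Measure.map_map measurable_snd (measurable_erealQuantile_pair F G)

lemma quantileCoupling_fst_le_snd {F G : ℝ → ℝ} (hle : ∀ x, F x ≤ G x) :
    quantileCoupling F G {q | q.1 ≤ q.2} = 1 := by
  rw [quantileCoupling, Measure.map_apply (measurable_erealQuantile_pair F G)
    (measurableSet_le measurable_fst measurable_snd)]
  have hpre : (fun u => (erealQuantile G u, erealQuantile F u)) ⁻¹' {q | q.1 ≤ q.2} = univ :=
    eq_univ_of_forall (erealQuantile_le_erealQuantile hle)
  rw [hpre, Measure.restrict_apply_univ, Real.volume_Ioc, sub_zero, ENNReal.ofReal_one]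

theorem stmt_13 (F G : ℝ → ℝ)
    (hF : Monotone F ∧ (∀ x, F x ∈ Set.Icc (0:ℝ) 1) ∧
      ∀ x, ContinuousWithinAt F (Set.Ici x) x)
    (hG : Monotone G ∧ (∀ x, G x ∈ Set.Icc (0:ℝ) 1) ∧
      ∀ x, ContinuousWithinAt G (Set.Ici x) x)
    (hle : ∀ x, F x ≤ G x) :
    ∃ Pi : Measure (EReal × EReal), IsProbabilityMeasure Pi ∧
      Pi {q : EReal × EReal | q.1 ≤ q.2} = 1 ∧
      (∀ x : ℝ, Pi.map Prod.fst {y : EReal | y ≤ (x : EReal)} = ENNReal.ofReal (G x)) ∧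
      (∀ x : ℝ, Pi.map Prod.snd {y : EReal | y ≤ (x : EReal)} = ENNReal.ofReal (F x)) := by
  obtain ⟨hFm, hF01, hFrc⟩ := hF
  obtain ⟨hGm, hG01, hGrc⟩ := hG
  refine ⟨quantileCoupling F G, inferInstance, quantileCoupling_fst_le_snd hle,
    fun x => ?_, fun x => ?_⟩
  · rw [quantileCoupling_map_fst]
    exact map_erealQuantile_Iic hGm hGrc (hG01 x).2
  · rw [quantileCoupling_map_snd]
    exact map_erealQuantile_Iic hFm hFrc (hF01 x).2
end
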